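/- arXiv:2308.15848 — 4 statements merged into one kernel-verified Lean document; each statement's English description precedes it below -/
import Mathlib

section
/- For any commutative unital ring A and any n ≥ 4, one has M_n(1_A, (n-2)·1_A, 1_A, 2_A, ..., 2_A) = -Id, where after the first three entries 1, n-2, 1 there are n-3 entries all equal to 2_A. -/
open Matrix

/-- `Mlist [a₁,…,aₙ] = M(aₙ)⋯M(a₁)` where `M(a) = [[a,-1],[1,0]]`. -/
def Mlist {A : Type*} [CommRing A] (l : List A) : Matrix (Fin 2) (Fin 2) A :=
  ((l.map (fun a => !![a, -1; 1, 0])).reverse).prod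

/-- The continuant `K` (tridiagonal determinant), with `K [] = 1`. -/
def cont {A : Type*} [CommRing A] : List A → A
  | [] => 1
  | [a] => a
  | a :: b :: l => a * cont (b :: l) - cont l

/-- `(a₁,…,aₙ) ⊕ (b₁,…,bₘ) = (a₁+bₘ, a₂,…,aₙ₋₁, aₙ+b₁, b₂,…,bₘ₋₁)` (for lists of length ≥ 2). -/
def oplus {A : Type*} [CommRing A] (la lb : List A) : List A :=
  match la, lb with
  | a1 :: ta, b1 :: tb =>
      (a1 + tb.getLastD b1) :: (ta.dropLast ++ ((ta.getLastD a1 + b1) :: tb.dropLast))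
  | _, _ => []


lemma Mlist_cons {A : Type*} [CommRing A] (a : A) (l : List A) :
    Mlist (a :: l) = Mlist l * !![a, -1; 1, 0] := by
  simp [Mlist]

lemma Mlist_replicate_two {A : Type*} [CommRing A] (k : ℕ) :
    Mlist (List.replicate k (2 : A)) = !![(k : A) + 1, -(k : A); (k : A), 1 - (k : A)] := by
  induction k with
  | zero => simp [Mlist]; ext i j; fin_cases i <;> fin_cases j <;> simp
  | succ k ih =>
    rw [List.replicate_succ, Mlist_cons, ih]
    ext i j
    fin_cases i <;> fin_cases j <;>
      simp [Matrix.mul_apply, Fin.sum_univ_succ] <;> ring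

theorem stmt2 {A : Type*} [CommRing A] (n : ℕ) (hn : 4 ≤ n) :
    Mlist ((1 : A) :: ((n : A) - 2) :: (1 : A) :: List.replicate (n - 3) (2 : A)) = -1 := by
  obtain ⟨k, rfl⟩ : ∃ k, n = k + 4 := ⟨n - 4, by omega⟩
  have h3 : k + 4 - 3 = k + 1 := by omega
  rw [h3, Mlist_cons, Mlist_cons, Mlist_cons, Mlist_replicate_two]
  ext i j
  fin_cases i <;> fin_cases j <;>
    simp [Matrix.mul_apply, Fin.sum_univ_succ] <;> ring
end

section
/- Over a commutative unital ring A, a quadruple (a,b,c,d) satisfies M_4(a,b,c,d) = ±Id if and only if either (c = -a, d = -b and a·b = 0_A), or (c = a, d = b and a·b = 2_A). -/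
open Matrix

/-
Every factor `[[x, -1], [1, 0]]` has determinant `1`, so `M₄ = M(d)M(c) · M(b)M(a)` equals `±1`
exactly when `M(b)M(a) = ±adj(M(d)M(c))`. Both sides are explicit:
`M(b)M(a) = [[ba - 1, -b], [a, -1]]` and `adj(M(d)M(c)) = [[-1, d], [-c, dc - 1]]`,
and comparing entries gives the two families.
-/

section Mlist

variable {A : Type*} [CommRing A]

theorem Mlist_append (l₁ l₂ : List A) : Mlist (l₁ ++ l₂) = Mlist l₂ * Mlist l₁ := by
  simp [Mlist]

theorem det_Mlist (l : List A) : (Mlist l).det = 1 := by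
  induction l with
  | nil => simp [Mlist]
  | cons a l ih =>
    rw [← List.singleton_append, Mlist_append, det_mul, ih]
    simp [Mlist, det_fin_two_of]

theorem Mlist_pair (a b : A) : Mlist [a, b] = !![b * a - 1, -b; a, -1] := by
  ext i j
  fin_cases i <;> fin_cases j <;> simp [Mlist, sub_eq_add_neg]

theorem adjugate_Mlist_pair (c d : A) :
    (Mlist [c, d]).adjugate = !![-1, d; -c, d * c - 1] := by
  rw [Mlist_pair, adjugate_fin_two_of]
  simp

end Mlist

section Unimodular

variable {n A : Type*} [Fintype n] [DecidableEq n] [CommRing A] {P Q : Matrix n n A}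

theorem Matrix.mul_eq_one_iff_eq_adjugate (hQ : Q.det = 1) : Q * P = 1 ↔ P = Q.adjugate := by
  constructor
  · intro h
    calc P = Q.adjugate * Q * P := by rw [adjugate_mul, hQ, one_smul, Matrix.one_mul]
      _ = Q.adjugate := by rw [Matrix.mul_assoc, h, Matrix.mul_one]
  · rintro rfl
    rw [mul_adjugate, hQ, one_smul]

theorem Matrix.mul_eq_neg_one_iff_eq_neg_adjugate (hQ : Q.det = 1) :
    Q * P = -1 ↔ P = -Q.adjugate := by
  rw [← neg_eq_iff_eq_neg, ← Matrix.mul_neg, mul_eq_one_iff_eq_adjugate hQ, neg_eq_iff_eq_neg]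

end Unimodular

theorem stmt6 {A : Type*} [CommRing A] (a b c d : A) :
    (Mlist [a, b, c, d] = 1 ∨ Mlist [a, b, c, d] = -1) ↔
      (c = -a ∧ d = -b ∧ a * b = 0) ∨ (c = a ∧ d = b ∧ a * b = 2) := by
  have hsplit : Mlist [a, b, c, d] = Mlist [c, d] * Mlist [a, b] := Mlist_append [a, b] [c, d]
  rw [hsplit, mul_eq_one_iff_eq_adjugate (det_Mlist _),
    mul_eq_neg_one_iff_eq_neg_adjugate (det_Mlist _), adjugate_Mlist_pair, Mlist_pair]
  simp only [EmbeddingLike.apply_eq_iff_eq, vecCons_inj, sub_eq_neg_self, and_true, neg_of,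
    neg_cons, neg_neg, neg_empty, neg_sub, neg_inj]
  refine or_congr ⟨?_, ?_⟩ ⟨?_, ?_⟩
  · rintro ⟨⟨hab, rfl⟩, rfl, -⟩
    exact ⟨by ring, rfl, by linear_combination hab⟩
  · rintro ⟨rfl, rfl, hab⟩
    exact ⟨⟨by linear_combination hab, rfl⟩, by ring, by linear_combination -hab⟩
  · rintro ⟨⟨hab, rfl⟩, rfl, -⟩
    exact ⟨rfl, rfl, by linear_combination hab⟩
  · rintro ⟨rfl, rfl, hab⟩
    exact ⟨⟨by linear_combination hab, rfl⟩, rfl, by linear_combination hab⟩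
end

section
/- In Z/4Z, for every even n ≥ 2 and every n-tuple (a_1,...,a_n) with all a_i ∈ {0, 2} (mod 4), there exist x, y ∈ {0, 2} such that M_{n+2}(x, a_1, ..., a_n, y) = ±Id over Z/4Z. In particular, the continuant K_n(a_1,...,a_n) of any such tuple equals ±1 in Z/4Z. -/
open Matrix

lemma Mlist_concat {A : Type*} [CommRing A] (l : List A) (y : A) :
    Mlist (l ++ [y]) = !![y, -1; 1, 0] * Mlist l := by
  simp [Mlist]

lemma Mlist_entries {A : Type*} [CommRing A] (l : List A) (a : A) :
    Mlist (a :: l) 0 0 = cont (a :: l) ∧ Mlist (a :: l) 0 1 = -cont l := by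
  induction l generalizing a with
  | nil =>
      constructor <;> simp [Mlist, cont]
  | cons b l ih =>
      have h1 := (ih b).1
      have h2 := (ih b).2
      rw [Mlist_cons]
      constructor <;>
        simp [Matrix.mul_apply, Fin.sum_univ_two, h1, h2, cont] <;> ring

lemma inv4 : ∀ l : List (ZMod 4), Even l.length → (∀ a ∈ l, a = 0 ∨ a = 2) →
    ∃ e s t : ZMod 4, (e = 1 ∨ e = -1) ∧ (s = 0 ∨ s = 2) ∧ (t = 0 ∨ t = 2) ∧
      Mlist l = !![e, s; t, e]
  | [], _, _ => ⟨1, 0, 0, Or.inl rfl, Or.inl rfl, Or.inl rfl, by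
      show (1 : Matrix (Fin 2) (Fin 2) (ZMod 4)) = _
      decide⟩
  | [x], he, _ => by simp at he
  | x :: y :: l, he, hmem => by
      have he' : Even l.length := by
        simpa [Nat.even_add_one, parity_simps] using he
      obtain ⟨e, s, t, he1, hs1, ht1, hM⟩ := inv4 l he'
        (fun a ha => hmem a (by simp [ha]))
      have hx := hmem x (by simp)
      have hy := hmem y (by simp)
      rw [Mlist_cons, Mlist_cons, hM]
      rcases he1 with rfl | rfl <;> rcases hs1 with rfl | rfl <;>
        rcases ht1 with rfl | rfl <;> rcases hx with rfl | rfl <;>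
        rcases hy with rfl | rfl <;> decide

theorem stmt11 (n : ℕ) (hn : 2 ≤ n) (he : Even n) (l : List (ZMod 4)) (hl : l.length = n)
    (h : ∀ a ∈ l, a = 0 ∨ a = 2) :
    (∃ x y : ZMod 4, (x = 0 ∨ x = 2) ∧ (y = 0 ∨ y = 2) ∧
      (Mlist (x :: (l ++ [y])) = 1 ∨ Mlist (x :: (l ++ [y])) = -1)) ∧
    (cont l = 1 ∨ cont l = -1) := by
  obtain ⟨e, s, t, he1, hs1, ht1, hM⟩ := inv4 l (hl ▸ he) h
  constructor
  · have key : ∀ x y : ZMod 4,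
        Mlist (x :: (l ++ [y])) = !![y, -1; 1, 0] * !![e, s; t, e] * !![x, -1; 1, 0] := by
      intro x y
      rw [Mlist_cons, Mlist_concat, hM]
    simp only [key]
    rcases he1 with rfl | rfl <;> rcases hs1 with rfl | rfl <;>
      rcases ht1 with rfl | rfl <;> decide
  · cases l with
    | nil => simp at hl; omega
    | cons a l' =>
      have := (Mlist_entries l' a).1
      rw [hM] at this
      simp at this
      rw [← this]
      exact he1
end

section
/- There are exactly 2^{n-2} tuples (a_1,...,a_n) of even length n ≥ 4 over Z/4Z with all entries in {0, 2} satisfying M_n(a_1,...,a_n) = ±Id. -/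
open Matrix

/-!
For `a ∈ {0, 2} ⊆ ℤ/4` we have `[[a, -1], [1, 0]] = J + a E₁₁` with `J` the quarter turn, and the
product of any two such `a` vanishes. Expanding `M_n` therefore leaves only the terms linear in the
`aₖ`; since conjugation by `J` swaps `E₁₁` and `E₂₂`, this gives `M_n = Jⁿ [[1, t], [-s, 1]]`, where
`s` and `t` are the sums of the entries in odd and in even positions. For even `n`, `Jⁿ = ±1`, so
`M_n = ±1` exactly when `s = t = 0`. Halving the entries, the tuples counted form the kernel of the
surjection `(ℤ/2)ⁿ → (ℤ/2)²` taking the two alternating sums, which has `2ⁿ⁻²` elements.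
-/

section AltSums

variable {M : Type*} [AddCommMonoid M] {n : ℕ}

/-- Positions are 0-based, so this is `a₁ + a₃ + ⋯` in the paper's indexing. -/
def evenSum (a : Fin n → M) : M := ∑ i with Even i.val, a i

def oddSum (a : Fin n → M) : M := ∑ i with Odd i.val, a i

theorem evenSum_succ (a : Fin (n + 1) → M) : evenSum a = a 0 + oddSum (fun i => a i.succ) := by
  simp [evenSum, oddSum, Finset.sum_filter, Fin.sum_univ_succ, Nat.even_add_one]

theorem oddSum_succ (a : Fin (n + 1) → M) : oddSum a = evenSum (fun i => a i.succ) := by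
  simp [evenSum, oddSum, Finset.sum_filter, Fin.sum_univ_succ, Nat.odd_add_one]

theorem evenSum_map {N : Type*} [AddCommMonoid N] (f : M →+ N) (a : Fin n → M) :
    evenSum (fun i => f (a i)) = f (evenSum a) :=
  (map_sum f a _).symm

theorem oddSum_map {N : Type*} [AddCommMonoid N] (f : M →+ N) (a : Fin n → M) :
    oddSum (fun i => f (a i)) = f (oddSum a) :=
  (map_sum f a _).symm

end AltSums

def quarterTurn (A : Type*) [CommRing A] : Matrix (Fin 2) (Fin 2) A := !![0, -1; 1, 0]

section Rotation

variable {A : Type*} [CommRing A]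

theorem quarterTurn_sq : quarterTurn A ^ 2 = -1 := by
  ext i j
  fin_cases i <;> fin_cases j <;> simp [quarterTurn, sq]

theorem quarterTurn_pow_of_even {n : ℕ} (hn : Even n) :
    quarterTurn A ^ n = 1 ∨ quarterTurn A ^ n = -1 := by
  obtain ⟨k, rfl⟩ := hn
  rw [← two_mul, pow_mul, quarterTurn_sq]
  exact neg_one_pow_eq_or _ k

theorem mlist_cons (x : A) (l : List A) : Mlist (x :: l) = Mlist l * !![x, -1; 1, 0] := by
  simp [Mlist]

theorem mlist_ofFn_of_mul_eq_zero {n : ℕ} (a : Fin n → A) (ha : ∀ i j, a i * a j = 0) :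
    Mlist (List.ofFn a) = quarterTurn A ^ n * !![1, oddSum a; -evenSum a, 1] := by
  induction n with
  | zero => simp [Mlist, evenSum, oddSum, Matrix.one_fin_two]
  | succ n ih =>
    have hs : evenSum (fun i => a i.succ) * a 0 = 0 := by
      simp only [evenSum, Finset.sum_mul]
      exact Finset.sum_eq_zero fun i _ => ha _ _
    rw [List.ofFn_succ, mlist_cons, ih (fun i => a i.succ) fun i j => ha _ _, evenSum_succ,
      oddSum_succ, pow_succ, mul_assoc, mul_assoc]
    congr 1
    ext i j
    fin_cases i <;> fin_cases j <;> simp [quarterTurn, hs]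

theorem fin_two_eq_one_or_neg_one_iff (h : (-1 : A) ≠ 1) (s t : A) :
    (!![1, t; -s, 1] = 1 ∨ !![1, t; -s, 1] = -1) ↔ s = 0 ∧ t = 0 := by
  simp [Matrix.one_fin_two, h.symm, and_comm]

theorem mlist_ofFn_eq_one_or_neg_one_iff (h : (-1 : A) ≠ 1) {n : ℕ} (hn : Even n)
    (a : Fin n → A) (ha : ∀ i j, a i * a j = 0) :
    (Mlist (List.ofFn a) = 1 ∨ Mlist (List.ofFn a) = -1) ↔ evenSum a = 0 ∧ oddSum a = 0 := by
  rw [mlist_ofFn_of_mul_eq_zero a ha, ← fin_two_eq_one_or_neg_one_iff h]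
  rcases quarterTurn_pow_of_even (A := A) hn with hJ | hJ <;>
    simp only [hJ, one_mul, neg_one_mul, neg_eq_iff_eq_neg, neg_neg, or_comm]

end Rotation

section Counting

variable {G : Type*} [AddCommGroup G] {n : ℕ}

def altSums (n : ℕ) : (Fin n → G) →+ G × G :=
  AddMonoidHom.mk' (fun a => (evenSum a, oddSum a)) fun a b => by
    simp [evenSum, oddSum, Finset.sum_add_distrib]

@[simp]
theorem altSums_apply (a : Fin n → G) : altSums n a = (evenSum a, oddSum a) := rfl

theorem altSums_surjective (hn : 2 ≤ n) : Function.Surjective (altSums (G := G) n) := by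
  rintro ⟨x, y⟩
  refine ⟨Pi.single ⟨0, by omega⟩ x + Pi.single ⟨1, by omega⟩ y, ?_⟩
  simp [evenSum, oddSum, Finset.sum_add_distrib, Finset.sum_pi_single']

theorem card_altSums_ker [Finite G] (hn : 2 ≤ n) :
    Nat.card (altSums (G := G) n).ker = Nat.card G ^ (n - 2) := by
  have hcard := (altSums (G := G) n).ker.card_mul_index
  rw [AddSubgroup.index_ker, AddMonoidHom.range_eq_top.2 (altSums_surjective hn),
    Nat.card_congr AddSubgroup.topEquiv.toEquiv, Nat.card_prod, Nat.card_fun, Nat.card_fin,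
    ← pow_sub_mul_pow _ hn, sq] at hcard
  have : 0 < Nat.card G := Nat.card_pos
  exact Nat.eq_of_mul_eq_mul_right (by positivity) hcard

end Counting

def double : ZMod 2 →+ ZMod 4 where
  toFun x := 2 * x.val
  map_zero' := by decide
  map_add' := by decide

theorem double_injective : Function.Injective double := by decide

theorem double_mul_double (x y : ZMod 2) : double x * double y = 0 := by
  revert x y; decide

theorem eq_zero_or_eq_two_iff (x : ZMod 4) : x = 0 ∨ x = 2 ↔ ∃ y, double y = x := by
  revert x; decide

theorem mlist_double_eq_one_or_neg_one_iff {n : ℕ} (hn : Even n) (b : Fin n → ZMod 2) :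
    (Mlist (List.ofFn fun i => double (b i)) = 1 ∨ Mlist (List.ofFn fun i => double (b i)) = -1)
      ↔ b ∈ (altSums n).ker := by
  rw [mlist_ofFn_eq_one_or_neg_one_iff (by decide) hn _ fun i j => double_mul_double _ _,
    evenSum_map, oddSum_map, AddMonoidHom.mem_ker, map_eq_zero_iff _ double_injective,
    map_eq_zero_iff _ double_injective]
  simp [Prod.ext_iff]

theorem stmt13 (n : ℕ) (hn : 4 ≤ n) (he : Even n) :
    Nat.card {a : Fin n → ZMod 4 //
      (∀ i, a i = 0 ∨ a i = 2) ∧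
      (Mlist (List.ofFn a) = 1 ∨ Mlist (List.ofFn a) = -1)} = 2 ^ (n - 2) := by
  have himage : {a : Fin n → ZMod 4 | (∀ i, a i = 0 ∨ a i = 2) ∧
      (Mlist (List.ofFn a) = 1 ∨ Mlist (List.ofFn a) = -1)} =
      (double ∘ ·) '' (altSums (G := ZMod 2) n).ker := by
    ext a
    simp only [eq_zero_or_eq_two_iff, Classical.skolem, Set.mem_ofPred_eq, Set.mem_image,
      SetLike.mem_coe]
    constructor
    · rintro ⟨⟨b, hb⟩, hM⟩
      obtain rfl : double ∘ b = a := funext hb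
      exact ⟨b, (mlist_double_eq_one_or_neg_one_iff he b).1 hM, rfl⟩
    · rintro ⟨b, hb, rfl⟩
      exact ⟨⟨b, fun i => rfl⟩, (mlist_double_eq_one_or_neg_one_iff he b).2 hb⟩
  change Nat.card ↥{a : Fin n → ZMod 4 | _} = _
  rw [himage, Nat.card_image_of_injective (double_injective.comp_left (α := Fin n)),
    SetLike.coe_sort_coe, card_altSums_ker (by omega), Nat.card_zmod]
end
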